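/- Let p ≥ 3 be prime, let s ≥ 0, let m = (p,…,p) (s+1 copies), and let S̄ be the p^{2s+2} × p^{2s+2} matrix with entries s_{(k,κ),(k̃,κ̃)} = −∏_{ℓ=0}^s ζ_p^{(κ_ℓ k̃_ℓ − κ̃_ℓ k_ℓ)/2} whenever (k̃,κ̃), (k,κ), (0,0) are pairwise distinct, and s_{(k,κ),(k̃,κ̃)} = 1 − δ_{(k,κ),(k̃,κ̃)} otherwise (indices ranging over (⊕_{ℓ=0}^s ℤ_p) × (⊕_{ℓ=0}^s ℤ_p); ζ_p a fixed primitive p-th root of unity; division by 2 taken modulo p). Then every off-diagonal entry of S̄ is a 2p-th root of unity, and for every positive integer N the Hadamard power S̄^{∘N} (entrywise N-th power) has exactly two distinct eigenvalues. Consequently (by the roux lines detector of Iverson–Mixon), the Gabor–Steiner equiangular tight frame G(m) spans a set of roux lines. -/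

import Mathlib

noncomputable section

/-- `ζ_q^a` for `a : ℤ_q`, with `ζ_q = exp(2πi/q)` a fixed primitive `q`-th root of
unity. -/
def zpow' (q : ℕ) (a : ZMod q) : ℂ :=
  Complex.exp (2 * Real.pi * Complex.I * (((a.val : ℕ) : ℂ) / ((q : ℕ) : ℂ)))

/-- The normalized signature matrix `S̄` of the Gabor–Steiner ETF `G(p,…,p)`: entries
`s_{(k,κ),(k̃,κ̃)} = −∏_{ℓ=0}^s ζ_p^{(κ_ℓ k̃_ℓ − κ̃_ℓ k_ℓ)/2}` when `(k,κ)`, `(k̃,κ̃)`,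
`(0,0)` are pairwise distinct, and `1 − δ_{(k,κ),(k̃,κ̃)}` otherwise (division by `2`
taken modulo `p`). -/
def gsSbarP (p : ℕ) (s : ℕ)
    (a b : (Fin (s + 1) → ZMod p) × (Fin (s + 1) → ZMod p)) : ℂ :=
  if a ≠ b ∧ a ≠ 0 ∧ b ≠ 0 then
    -∏ ℓ, zpow' p ((a.2 ℓ * b.1 ℓ - b.2 ℓ * a.1 ℓ) * (2 : ZMod p)⁻¹)
  else if a = b then 0 else 1

/-!
Conjugating by the diagonal matrix that multiplies the row and the column of `0` by
`ε = (-1)^N` turns `S̄^{∘N}` into `ε (K - 1)`, where `K_{a,b} = ζ_p^{t ω(a,b)}`, `t = N/2` and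
`ω` is the standard symplectic form on `ℤ_p^{s+1} × ℤ_p^{s+1}`. If `t = 0` then `K` is the
all-ones matrix and `K² = nK` with `n = p^{2s+2}`. Otherwise, since `ω(a,b) + ω(b,c) = ω(a - c, b)`,
the entries of `K²` are the character sums `∑_b ζ_p^{t ω(a - c, b)}`, which vanish for `a ≠ c`
by nondegeneracy, so `K² = n`. Either way `K` is a non-scalar root of a quadratic with distinct
roots, hence has exactly two eigenvalues, and so does `ε (K - 1)`.
-/

open Matrix Polynomial

theorem AddChar.map_sum_eq_prod {ι A M : Type*} [AddCommMonoid A] [CommMonoid M]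
    (ψ : AddChar A M) (s : Finset ι) (f : ι → A) :
    ψ (∑ i ∈ s, f i) = ∏ i ∈ s, ψ (f i) := by
  induction s using Finset.cons_induction with
  | empty => simp
  | cons i s _ ih => rw [Finset.sum_cons, Finset.prod_cons, map_add_eq_mul, ih]

theorem zpow'_eq_stdAddChar {q : ℕ} [NeZero q] (a : ZMod q) :
    zpow' q a = ZMod.stdAddChar a := by
  rw [ZMod.stdAddChar_apply, ZMod.toCircle_apply, zpow', mul_div_assoc]

section Spectrum

variable {𝕜 A : Type*} [Field 𝕜] [Ring A] [Algebra 𝕜 A]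

theorem spectrum_eq_pair_of_mul_eq_zero {a : A} {μ ν : 𝕜}
    (h : (a - algebraMap 𝕜 A μ) * (a - algebraMap 𝕜 A ν) = 0)
    (hμ : a ≠ algebraMap 𝕜 A μ) (hν : a ≠ algebraMap 𝕜 A ν) :
    spectrum 𝕜 a = {μ, ν} := by
  have : Nontrivial A := ⟨⟨_, _, hμ⟩⟩
  have hcomm : Commute (a - algebraMap 𝕜 A μ) (a - algebraMap 𝕜 A ν) :=
    ((Commute.refl a).sub_right (Algebra.commute_algebraMap_right ν a)).sub_left
      (Algebra.commute_algebraMap_left μ _)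
  refine subset_antisymm (fun k hk => ?_) ?_
  · have hroot := spectrum.subset_polynomial_aeval a ((X - C μ) * (X - C ν)) ⟨k, hk, rfl⟩
    simp only [map_mul, map_sub, aeval_X, aeval_C, h, spectrum.zero_eq, eval_mul, eval_sub,
      eval_X, eval_C, Set.mem_singleton_iff, mul_eq_zero, sub_eq_zero] at hroot
    exact hroot
  · rintro k (rfl | rfl) <;> rw [spectrum.mem_iff] <;> intro hunit
    · exact hν (sub_eq_zero.mp ((hunit.neg.mul_right_eq_zero).mp (by rwa [neg_sub])))
    · exact hμ (sub_eq_zero.mp ((hunit.neg.mul_right_eq_zero).mp (by rwa [neg_sub, ← hcomm.eq])))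

theorem spectrum_mul_mul_self_of_mul_self_eq_one {a d : A} (hd : d * d = 1) :
    spectrum 𝕜 (d * a * d) = spectrum 𝕜 a :=
  spectrum.units_conjugate (u := ⟨d, d, hd, hd⟩)

end Spectrum

theorem spectrum_smul_sub_one {A : Type*} [Ring A] [Algebra ℂ A] {a : A} {α β : ℂ}
    (ha : spectrum ℂ a = {α, β}) (ε : ℂ) :
    spectrum ℂ (ε • (a - 1)) = {ε * (α - 1), ε * (β - 1)} := by
  have h := spectrum.map_polynomial_aeval_of_nonempty a (C ε * (X - 1)) (by simp [ha])
  simp only [map_mul, map_sub, aeval_C, aeval_X, map_one, ← Algebra.smul_def, ha,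
    Set.image_pair, eval_mul, eval_sub, eval_C, eval_X, eval_one] at h
  exact h

section CharMatrix

variable {R V S : Type*} [CommRing R] [AddCommGroup V] [Module R V] [Field S]
  (ψ : AddChar R S) (B : LinearMap.BilinForm R V)

def charMatrix : Matrix V V S := Matrix.of fun a b => ψ (B a b)

@[simp]
theorem charMatrix_apply (a b : V) : charMatrix ψ B a b = ψ (B a b) := rfl

variable [Fintype V]

theorem charMatrix_one_mul_self :
    charMatrix (1 : AddChar R S) B * charMatrix 1 B = (Fintype.card V : S) • charMatrix 1 B := by
  ext a c
  simp [Matrix.mul_apply, Finset.card_univ]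

theorem sum_addChar_bilinForm_eq_zero {ψ : AddChar R S} (hψ : Function.Injective ψ)
    {B : LinearMap.BilinForm R V} (hB : B.SeparatingLeft) {d : V} (hd : d ≠ 0) :
    ∑ b, ψ (B d b) = 0 := by
  obtain ⟨b, hb⟩ : ∃ b, B d b ≠ 0 := by
    by_contra! h
    exact hd (hB d h)
  refine AddChar.sum_eq_zero_of_ne_one (ψ := ψ.compAddMonoidHom (B d).toAddMonoidHom) ?_
  refine AddChar.ne_one_iff.mpr ⟨b, ?_⟩
  rw [AddChar.compAddMonoidHom_apply, LinearMap.toAddMonoidHom_coe, ← ψ.map_zero_eq_one]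
  exact hψ.ne hb

variable [DecidableEq V]

theorem charMatrix_ne_algebraMap [Nontrivial V] (c : S) :
    charMatrix ψ B ≠ algebraMap S (Matrix V V S) c := by
  obtain ⟨b, hb⟩ := exists_ne (0 : V)
  intro h
  have h0b := congrFun (congrFun h 0) b
  rw [charMatrix_apply, map_zero, LinearMap.zero_apply, ψ.map_zero_eq_one,
    Matrix.algebraMap_matrix_apply, if_neg hb.symm] at h0b
  exact one_ne_zero h0b

theorem charMatrix_mul_self {ψ : AddChar R S} (hψ : Function.Injective ψ)
    {B : LinearMap.BilinForm R V} (hB : B.IsAlt) (hB' : B.SeparatingLeft) :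
    charMatrix ψ B * charMatrix ψ B = (Fintype.card V : S) • 1 := by
  ext a c
  have hrow : ∀ b, ψ (B a b) * ψ (B b c) = ψ (B (a - c) b) := fun b => by
    rw [← AddChar.map_add_eq_mul, ← LinearMap.IsAlt.neg hB c b, map_sub, LinearMap.sub_apply,
      sub_eq_add_neg]
  simp only [Matrix.mul_apply, charMatrix_apply, hrow, Matrix.smul_apply, Matrix.one_apply]
  by_cases hac : a = c
  · simp only [hac, if_true, sub_self, map_zero, LinearMap.zero_apply, AddChar.map_zero_eq_one,
      Finset.sum_const, Finset.card_univ, nsmul_eq_mul, mul_one, smul_eq_mul]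
  · rw [if_neg hac, smul_zero, sum_addChar_bilinForm_eq_zero hψ hB' (sub_ne_zero.mpr hac)]

theorem spectrum_charMatrix [Nontrivial V] {ψ : AddChar R S} (hψ : Function.Injective ψ)
    {B : LinearMap.BilinForm R V} (hB : B.IsAlt) (hB' : B.SeparatingLeft) {r : S}
    (hr : r * r = Fintype.card V) :
    spectrum S (charMatrix ψ B) = {r, -r} := by
  refine spectrum_eq_pair_of_mul_eq_zero ?_ (charMatrix_ne_algebraMap ψ B r)
    (charMatrix_ne_algebraMap ψ B _)
  rw [map_neg, sub_neg_eq_add,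
    ← (Algebra.commute_algebraMap_right r (charMatrix ψ B)).mul_self_sub_mul_self_eq',
    charMatrix_mul_self hψ hB hB', ← map_mul, hr, Algebra.algebraMap_eq_smul_one, sub_self]

theorem spectrum_charMatrix_one [Nontrivial V] :
    spectrum S (charMatrix (1 : AddChar R S) B) = {(Fintype.card V : S), 0} := by
  refine spectrum_eq_pair_of_mul_eq_zero ?_ (charMatrix_ne_algebraMap 1 B _)
    (charMatrix_ne_algebraMap 1 B _)
  rw [map_zero, sub_zero, sub_mul, charMatrix_one_mul_self, Algebra.algebraMap_eq_smul_one,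
    smul_mul_assoc, one_mul, sub_self]

end CharMatrix

section Symplectic

variable (R ι : Type*) [CommRing R] [Fintype ι]

def symplecticForm : LinearMap.BilinForm R ((ι → R) × (ι → R)) :=
  LinearMap.mk₂ R (fun a b => a.2 ⬝ᵥ b.1 - b.2 ⬝ᵥ a.1)
    (fun a a' b => by simp only [Prod.snd_add, Prod.fst_add, add_dotProduct, dotProduct_add]; ring)
    (fun c a b => by simp only [Prod.smul_snd, Prod.smul_fst, smul_dotProduct, dotProduct_smul,
      smul_sub])
    (fun a b b' => by simp only [Prod.snd_add, Prod.fst_add, add_dotProduct, dotProduct_add]; ring)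
    (fun c a b => by simp only [Prod.smul_snd, Prod.smul_fst, smul_dotProduct, dotProduct_smul,
      smul_sub])

variable {R ι}

theorem symplecticForm_apply (a b : (ι → R) × (ι → R)) :
    symplecticForm R ι a b = a.2 ⬝ᵥ b.1 - b.2 ⬝ᵥ a.1 := rfl

theorem symplecticForm_isAlt : (symplecticForm R ι).IsAlt := fun _ => sub_self _

theorem symplecticForm_separatingLeft [DecidableEq ι] : (symplecticForm R ι).SeparatingLeft := by
  intro d hd
  ext j
  · simpa [symplecticForm_apply] using hd (0, Pi.single j 1)
  · simpa [symplecticForm_apply] using hd (Pi.single j 1, 0)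

end Symplectic

section GaborSteiner

variable {p s : ℕ} [NeZero p]

local notation "σ" => symplecticForm (ZMod p) (Fin (s + 1))

theorem gsSbarP_eq (a b : (Fin (s + 1) → ZMod p) × (Fin (s + 1) → ZMod p)) :
    gsSbarP p s a b =
      if a = b then 0 else if a = 0 ∨ b = 0 then 1 else -ZMod.stdAddChar (σ a b * 2⁻¹) := by
  by_cases hab : a = b
  · simp [gsSbarP, hab]
  by_cases h0 : a = 0 ∨ b = 0
  · rw [gsSbarP, if_neg (by tauto), if_neg hab, if_neg hab, if_pos h0]
  rw [gsSbarP, if_pos (by tauto), if_neg hab, if_neg h0]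
  simp_rw [zpow'_eq_stdAddChar, ← AddChar.map_sum_eq_prod, ← Finset.sum_mul,
    Finset.sum_sub_distrib]
  rfl

theorem gsSbarP_pow_two_mul_self {a b : (Fin (s + 1) → ZMod p) × (Fin (s + 1) → ZMod p)}
    (hab : a ≠ b) : gsSbarP p s a b ^ (2 * p) = 1 := by
  rw [gsSbarP_eq, if_neg hab]
  split_ifs
  · exact one_pow _
  · rw [neg_pow, pow_mul, neg_one_sq, one_pow, one_mul, ← AddChar.map_nsmul_eq_pow, nsmul_eq_mul,
      Nat.cast_mul, ZMod.natCast_self, mul_zero, zero_mul, AddChar.map_zero_eq_one]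

theorem diagonal_mul_hadamardPow_gsSbarP_mul_diagonal {N : ℕ} (hN : N ≠ 0) :
    diagonal (fun a => if a = 0 then (-1 : ℂ) ^ N else 1) *
        Matrix.of (fun a b => gsSbarP p s a b ^ N) *
        diagonal (fun a => if a = 0 then (-1 : ℂ) ^ N else 1) =
      (-1 : ℂ) ^ N • (charMatrix (ZMod.stdAddChar.mulShift ((N : ZMod p) * 2⁻¹)) σ - 1) := by
  ext a b
  simp only [diagonal_mul, mul_diagonal, Matrix.of_apply, Matrix.smul_apply, Matrix.sub_apply,
    Matrix.one_apply, charMatrix_apply, AddChar.mulShift_apply, smul_eq_mul, gsSbarP_eq]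
  by_cases hab : a = b
  · subst hab
    simp [hN, symplecticForm_isAlt.self_eq_zero]
  by_cases ha : a = 0
  · subst ha
    simp [hab, Ne.symm hab]
  by_cases hb : b = 0
  · subst hb
    simp [hab]
  simp only [hab, ha, hb, if_false, or_self, one_mul, mul_one, sub_zero]
  rw [neg_pow, ← AddChar.map_nsmul_eq_pow, nsmul_eq_mul, mul_assoc, mul_comm (2⁻¹ : ZMod p)]

theorem spectrum_hadamardPow_gsSbarP {N : ℕ} (hN : N ≠ 0) :
    spectrum ℂ (Matrix.of fun a b => gsSbarP p s a b ^ N) =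
      spectrum ℂ
        ((-1 : ℂ) ^ N • (charMatrix (ZMod.stdAddChar.mulShift ((N : ZMod p) * 2⁻¹)) σ - 1)) := by
  rw [← diagonal_mul_hadamardPow_gsSbarP_mul_diagonal hN, spectrum_mul_mul_self_of_mul_self_eq_one]
  rw [diagonal_mul_diagonal, ← diagonal_one]
  congr 1
  ext a
  split_ifs <;> simp [← mul_pow]

theorem exists_spectrum_charMatrix_symplecticForm_eq_pair (hp : p.Prime) (t : ZMod p) :
    ∃ α β : ℂ, α ≠ β ∧ spectrum ℂ (charMatrix (ZMod.stdAddChar.mulShift t) σ) = {α, β} := by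
  have : Fact p.Prime := ⟨hp⟩
  set n := Fintype.card ((Fin (s + 1) → ZMod p) × (Fin (s + 1) → ZMod p))
  have hn : (n : ℂ) ≠ 0 := Nat.cast_ne_zero.mpr Fintype.card_ne_zero
  by_cases ht : t = 0
  · refine ⟨n, 0, hn, ?_⟩
    rw [ht, AddChar.mulShift_zero]
    exact spectrum_charMatrix_one _
  · obtain ⟨r, hr⟩ := IsAlgClosed.exists_eq_mul_self (n : ℂ)
    have hr0 : r ≠ 0 := by
      rintro rfl
      exact hn (by rw [hr, zero_mul])
    have hψ : Function.Injective (ZMod.stdAddChar.mulShift t) :=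
      fun x y h => mul_left_cancel₀ ht (ZMod.injective_stdAddChar h)
    exact ⟨r, -r, by rwa [Ne, self_eq_neg],
      spectrum_charMatrix hψ symplecticForm_isAlt symplecticForm_separatingLeft hr.symm⟩

end GaborSteiner

theorem gabor_steiner_roux_general {p : ℕ} (hp : p.Prime) [NeZero p] (s : ℕ) :
    (∀ a b : (Fin (s + 1) → ZMod p) × (Fin (s + 1) → ZMod p),
      a ≠ b → (gsSbarP p s a b) ^ (2 * p) = 1) ∧
    (∀ N : ℕ, 0 < N →
      ∃ μ ν : ℂ, μ ≠ ν ∧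
        spectrum ℂ (Matrix.of fun a b => (gsSbarP p s a b) ^ N) = {μ, ν}) := by
  refine ⟨fun a b hab => gsSbarP_pow_two_mul_self hab, fun N hN => ?_⟩
  obtain ⟨α, β, hαβ, hK⟩ := exists_spectrum_charMatrix_symplecticForm_eq_pair hp (N * 2⁻¹)
  rw [spectrum_hadamardPow_gsSbarP hN.ne', spectrum_smul_sub_one hK]
  exact ⟨_, _, by simpa using hαβ, rfl⟩

/-- For `p ≥ 3` prime and `m = (p,…,p)`, every off-diagonal entry of the normalized
signature matrix `S̄` of `G(m)` is a `2p`-th root of unity, and every Hadamard power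
`S̄^{∘N}` (`N ≥ 1`) has exactly two distinct eigenvalues.  Consequently, by the roux
lines detector of Iverson–Mixon, the Gabor–Steiner ETF `G(p,…,p)` spans a set of roux
lines. -/
theorem gabor_steiner_roux {p : ℕ} (hp : p.Prime) (hp3 : 3 ≤ p) [NeZero p] (s : ℕ) :
    (∀ a b : (Fin (s + 1) → ZMod p) × (Fin (s + 1) → ZMod p),
      a ≠ b → (gsSbarP p s a b) ^ (2 * p) = 1) ∧
    (∀ N : ℕ, 0 < N →
      ∃ μ ν : ℂ, μ ≠ ν ∧
        spectrum ℂ (Matrix.of fun a b => (gsSbarP p s a b) ^ N) = {μ, ν}) :=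
  gabor_steiner_roux_general hp s
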